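/- arXiv:1805.04375 — 2 statements merged into one kernel-verified Lean document; each statement's English description precedes it below -/
import Mathlib

section
/- Let χ be a quantifier-free formula of the first-order language of graphs with free variables x₁,…,x_r and let φ be the existential sentence ∃x₁⋯∃x_r χ. Then for every finite simple graph G and every natural number k: there exists a set F of unordered pairs of distinct vertices of G with |F| ≤ k such that G △ F ⊨ φ if and only if there exists a set U ⊆ V(G) with |U| ≤ r and a set F of unordered pairs of distinct vertices of U with |F| ≤ k such that G[U] △ F ⊨ φ, where G[U] is the subgraph of G induced by U. -/
open FirstOrder Language

/-- Satisfaction of a first-order sentence of the language of graphs in a simple graph. -/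
def SimpleGraph.Sat {V : Type*} (G : SimpleGraph V) (φ : Language.graph.Sentence) : Prop :=
  letI := G.structure
  V ⊨ φ

/-- The graph `G △ F`: the graph on `V(G)` whose edge set is the symmetric difference
of `E(G)` and `F`. -/
def SimpleGraph.symmDiffEdges {V : Type*} (G : SimpleGraph V) (F : Set (Sym2 V)) :
    SimpleGraph V :=
  SimpleGraph.fromEdgeSet (symmDiff G.edgeSet F)

/-- A graph embedding as a first-order embedding. -/
def graphFOEmb {W V : Type*} (H : SimpleGraph W) (G : SimpleGraph V) (f : W ↪ V)
    (hadj : ∀ a b, G.Adj (f a) (f b) ↔ H.Adj a b) :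
    @Language.Embedding Language.graph W V H.structure G.structure :=
  letI := H.structure
  letI := G.structure
  { toEmbedding := f
    map_fun' := fun {n} fn _ => isEmptyElim fn
    map_rel' := fun {n} R x => by
      cases R
      exact hadj (x 0) (x 1) }

/-- Let `χ` be quantifier-free with free variables `x₁,…,x_r` and `φ = ∃x₁⋯∃x_r χ`.
For every finite simple graph `G` and every `k`: there is a set `F` of unordered pairs
of distinct vertices with `|F| ≤ k` and `G △ F ⊨ φ` iff there are `U ⊆ V(G)` with
`|U| ≤ r` and a set `F` of unordered pairs of distinct vertices of `U` with `|F| ≤ k`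
such that `G[U] △ F ⊨ φ`. -/
theorem edgeEditing_existential_iff {V : Type} [Fintype V] (G : SimpleGraph V)
    {r : ℕ} (χ : Language.graph.BoundedFormula Empty r) (hqf : χ.IsQF) (k : ℕ) :
    (∃ F : Finset (Sym2 V), (∀ e ∈ F, ¬ e.IsDiag) ∧ F.card ≤ k ∧
        (G.symmDiffEdges ↑F).Sat χ.exs) ↔
    (∃ U : Finset V, U.card ≤ r ∧
      ∃ F : Finset (Sym2 (↑U : Set V)), (∀ e ∈ F, ¬ e.IsDiag) ∧ F.card ≤ k ∧
        ((G.induce ↑U).symmDiffEdges ↑F).Sat χ.exs) := by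
  classical
  have key : ∀ (U : Finset V) (F : Finset (Sym2 V)) (F' : Finset (Sym2 (↑U : Set V))),
      (∀ a b : (↑U : Set V), s(a, b) ∈ F' ↔ s((a : V), (b : V)) ∈ F) →
      ∀ a b : (↑U : Set V),
        (G.symmDiffEdges ↑F).Adj (a : V) (b : V) ↔
          ((G.induce ↑U).symmDiffEdges ↑F').Adj a b := by
    intro U F F' hFF' a b
    rw [SimpleGraph.symmDiffEdges, SimpleGraph.symmDiffEdges,
      SimpleGraph.fromEdgeSet_adj, SimpleGraph.fromEdgeSet_adj]
    have hiadj : (G.induce (↑U : Set V)).Adj a b ↔ G.Adj (a : V) (b : V) := Iff.rfl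
    have hedge : s(a, b) ∈ (G.induce (↑U : Set V)).edgeSet ↔
        s((a : V), (b : V)) ∈ G.edgeSet := by
      rw [SimpleGraph.mem_edgeSet, SimpleGraph.mem_edgeSet]; exact hiadj
    simp only [Set.mem_symmDiff, hedge, Finset.mem_coe, hFF' a b, ne_eq, Subtype.ext_iff]
  constructor
  · rintro ⟨F, hdiag, hcard, hsat⟩
    letI := (G.symmDiffEdges ↑F).structure
    rw [SimpleGraph.Sat, Sentence.Realize, BoundedFormula.realize_exs] at hsat
    obtain ⟨xs, hxs⟩ := hsat
    refine ⟨Finset.image xs Finset.univ, le_trans Finset.card_image_le (by simp), ?_⟩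
    set U : Finset V := Finset.image xs Finset.univ with hU
    set F' : Finset (Sym2 (↑U : Set V)) :=
      Finset.univ.filter (fun e => Sym2.map Subtype.val e ∈ F) with hF'
    have hmem : ∀ a b : (↑U : Set V), s(a, b) ∈ F' ↔ s((a : V), (b : V)) ∈ F := by
      intro a b; simp [hF']
    refine ⟨F', ?_, ?_, ?_⟩
    · intro e he
      have : Sym2.map Subtype.val e ∈ F := by
        simp only [hF', Finset.mem_filter] at he; exact he.2
      intro hd
      exact hdiag _ this ((Sym2.isDiag_map Subtype.val_injective).mpr hd)
    · refine le_trans ?_ hcard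
      have : F'.image (Sym2.map Subtype.val) ⊆ F := by
        intro e he
        simp only [Finset.mem_image] at he
        obtain ⟨e', he', rfl⟩ := he
        simp only [hF', Finset.mem_filter] at he'
        exact he'.2
      calc F'.card = (F'.image (Sym2.map Subtype.val)).card :=
            (Finset.card_image_of_injective _ (Sym2.map.injective Subtype.val_injective)).symm
        _ ≤ F.card := Finset.card_le_card this
    · letI := ((G.induce (↑U : Set V)).symmDiffEdges ↑F').structure
      rw [SimpleGraph.Sat, Sentence.Realize, BoundedFormula.realize_exs]
      have hxsU : ∀ i, xs i ∈ (↑U : Set V) := by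
        intro i; simp [hU]
      refine ⟨fun i => ⟨xs i, hxsU i⟩, ?_⟩
      let femb : @Language.Embedding Language.graph (↑U : Set V) V
          ((G.induce (↑U : Set V)).symmDiffEdges ↑F').structure
          (G.symmDiffEdges ↑F).structure :=
        graphFOEmb _ _ ⟨Subtype.val, Subtype.val_injective⟩
          (fun a b => by exact key U F F' hmem a b)
      refine (BoundedFormula.IsQF.realize_embedding hqf femb).mp ?_
      have h1 : (⇑femb ∘ (default : Empty → (↑U : Set V))) = (default : Empty → V) :=
        funext (fun e => e.elim)
      have h2 : (⇑femb ∘ fun i => (⟨xs i, hxsU i⟩ : (↑U : Set V))) = xs := funext fun i => rfl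
      rw [h1, h2]
      exact hxs
  · rintro ⟨U, hUcard, F', hdiag, hcard, hsat⟩
    letI := ((G.induce (↑U : Set V)).symmDiffEdges ↑F').structure
    rw [SimpleGraph.Sat, Sentence.Realize, BoundedFormula.realize_exs] at hsat
    obtain ⟨xs, hxs⟩ := hsat
    set F : Finset (Sym2 V) := F'.image (Sym2.map Subtype.val) with hF
    have hmem : ∀ a b : (↑U : Set V), s(a, b) ∈ F' ↔ s((a : V), (b : V)) ∈ F := by
      intro a b
      constructor
      · intro h; exact Finset.mem_image_of_mem _ h
      · intro h
        simp only [hF, Finset.mem_image] at h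
        obtain ⟨e', he', heq⟩ := h
        have : e' = s(a, b) :=
          Sym2.map.injective Subtype.val_injective (by simpa using heq)
        rwa [this] at he'
    refine ⟨F, ?_, le_trans Finset.card_image_le hcard, ?_⟩
    · intro e he
      simp only [hF, Finset.mem_image] at he
      obtain ⟨e', he', rfl⟩ := he
      intro hd
      exact hdiag _ he' ((Sym2.isDiag_map Subtype.val_injective).mp hd)
    · letI := (G.symmDiffEdges ↑F).structure
      rw [SimpleGraph.Sat, Sentence.Realize, BoundedFormula.realize_exs]
      refine ⟨fun i => (xs i : V), ?_⟩
      let femb : @Language.Embedding Language.graph (↑U : Set V) V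
          ((G.induce (↑U : Set V)).symmDiffEdges ↑F').structure
          (G.symmDiffEdges ↑F).structure :=
        graphFOEmb _ _ ⟨Subtype.val, Subtype.val_injective⟩
          (fun a b => by exact key U F F' hmem a b)
      have h0 := (BoundedFormula.IsQF.realize_embedding hqf femb
        (v := (default : Empty → (↑U : Set V))) (xs := xs)).mpr hxs
      have h1 : (⇑femb ∘ (default : Empty → (↑U : Set V))) = (default : Empty → V) :=
        funext (fun e => e.elim)
      have h2 : (⇑femb ∘ xs) = fun i => ((xs i : V)) := funext fun i => rfl
      rw [h1, h2] at h0
      exact h0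
end

section
/- Let n, k, t be positive integers with k ≤ n, and let G₁,…,G_t be finite simple graphs, each on the vertex set {1,…,n}. Let G' be the graph whose vertex set is the disjoint union of the sets {(i,a) : 1 ≤ i ≤ t, 1 ≤ a ≤ n} (copy vertices) and {(i,j)' : 1 ≤ i ≤ t, 1 ≤ j ≤ n−k+2} (pendant vertices), in which (i,a) and (i,b) are adjacent iff a and b are adjacent in G_i, each pendant vertex (i,j)' is adjacent to every copy vertex (i,a) with the same index i, and there are no other edges. Then the following are equivalent: (1) there exists a set S of vertices of G' with |S| ≤ n − k and a vertex x of G' − S whose neighborhood in G' − S is a clique (i.e., every two distinct neighbors of x in G' − S are adjacent in G' − S); (2) there exists i ∈ {1,…,t} such that G_i contains a clique with at least k vertices. -/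
open SimpleGraph

/-- The graph `G'` built from graphs `G₁,…,G_t`, each on the vertex set `{1,…,n}`:
its vertices are the copy vertices `(i,a)` for `i ∈ [t]`, `a ∈ [n]` and the pendant
vertices `(i,j)` for `i ∈ [t]`, `j ∈ [n-k+2]`; copy vertices `(i,a)` and `(i,b)` are
adjacent iff `a` and `b` are adjacent in `G_i`, each pendant vertex `(i,j)` is adjacent
to every copy vertex `(i,a)` with the same index `i`, and there are no other edges. -/
def crossCompGraph (n k t : ℕ) (G : Fin t → SimpleGraph (Fin n)) :
    SimpleGraph (Fin t × Fin n ⊕ Fin t × Fin (n - k + 2)) :=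
  SimpleGraph.fromRel (fun a b =>
    match a, b with
    | .inl (i, a), .inl (i', b) => i = i' ∧ (G i).Adj a b
    | .inr (i, _), .inl (i', _) => i = i'
    | _, _ => False)

lemma crossComp_adj_inl_inl (n k t : ℕ) (G : Fin t → SimpleGraph (Fin n))
    (i i' : Fin t) (a b : Fin n) :
    (crossCompGraph n k t G).Adj (.inl (i,a)) (.inl (i',b)) ↔
      (i = i' ∧ a ≠ b ∧ (G i).Adj a b) := by
  simp only [crossCompGraph, fromRel_adj]
  constructor
  · rintro ⟨hne, (⟨rfl, h⟩ | ⟨rfl, h⟩)⟩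
    · exact ⟨rfl, fun hab => hne (by rw [hab]), h⟩
    · exact ⟨rfl, fun hab => hne (by rw [hab]), h.symm⟩
  · rintro ⟨rfl, hab, h⟩
    exact ⟨by simp [hab], Or.inl ⟨rfl, h⟩⟩

lemma crossComp_adj_inr_inl (n k t : ℕ) (G : Fin t → SimpleGraph (Fin n))
    (i i' : Fin t) (a : Fin n) (j : Fin (n-k+2)) :
    (crossCompGraph n k t G).Adj (.inr (i,j)) (.inl (i',a)) ↔ i = i' := by
  simp [crossCompGraph, fromRel_adj]

lemma crossComp_not_adj_inr_inr (n k t : ℕ) (G : Fin t → SimpleGraph (Fin n))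
    (i i' : Fin t) (j j' : Fin (n-k+2)) :
    ¬ (crossCompGraph n k t G).Adj (.inr (i,j)) (.inr (i',j')) := by
  simp [crossCompGraph, fromRel_adj]

/-- There is a vertex set `S` of `G'` with `|S| ≤ n - k` such that some vertex of
`G' − S` has a clique neighborhood in `G' − S` iff some `G_i` contains a clique with at
least `k` vertices. -/
theorem crossComposition_clique (n k t : ℕ) (hn : 0 < n) (hk : 0 < k) (ht : 0 < t)
    (hkn : k ≤ n) (G : Fin t → SimpleGraph (Fin n)) :
    (∃ S : Finset (Fin t × Fin n ⊕ Fin t × Fin (n - k + 2)), S.card ≤ n - k ∧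
      ∃ x : ((↑S : Set (Fin t × Fin n ⊕ Fin t × Fin (n - k + 2)))ᶜ : Set _),
        ∀ y z : ((↑S : Set (Fin t × Fin n ⊕ Fin t × Fin (n - k + 2)))ᶜ : Set _),
          ((crossCompGraph n k t G).induce (↑S : Set _)ᶜ).Adj x y →
          ((crossCompGraph n k t G).induce (↑S : Set _)ᶜ).Adj x z →
          y ≠ z → ((crossCompGraph n k t G).induce (↑S : Set _)ᶜ).Adj y z) ↔
    (∃ i : Fin t, ∃ K : Finset (Fin n), (G i).IsClique ↑K ∧ k ≤ K.card) := by
  constructor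
  · rintro ⟨S, hS, ⟨x, hxmem⟩, hx⟩
    obtain ⟨i, a⟩ | ⟨i, j⟩ := x
    · -- x is a copy vertex: contradiction via two surviving pendants
      exfalso
      set T : Finset (Fin (n-k+2)) :=
        Finset.univ.filter (fun j => (Sum.inr (i, j) : Fin t × Fin n ⊕ _) ∈ S) with hT
      have hTcard : T.card ≤ S.card := by
        have hinj : Function.Injective
            (fun j : Fin (n-k+2) => (Sum.inr (i, j) : Fin t × Fin n ⊕ Fin t × Fin (n-k+2))) := by
          intro a b h; simpa using h
        calc T.card = (T.image (fun j => (Sum.inr (i, j) : Fin t × Fin n ⊕ _))).card :=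
              (Finset.card_image_of_injective _ hinj).symm
          _ ≤ S.card := by
              apply Finset.card_le_card
              intro v hv
              simp only [Finset.mem_image] at hv
              obtain ⟨j, hj, rfl⟩ := hv
              simpa [hT] using hj
      have h2 : 1 < (Tᶜ).card := by
        have hc : (Tᶜ).card = n - k + 2 - T.card := by
          rw [Finset.card_compl]; simp
        omega
      obtain ⟨j1, hj1, j2, hj2, hj12⟩ := Finset.one_lt_card.mp h2
      have hj1S : (Sum.inr (i, j1) : Fin t × Fin n ⊕ _) ∉ S := by
        simpa [hT] using hj1
      have hj2S : (Sum.inr (i, j2) : Fin t × Fin n ⊕ _) ∉ S := by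
        simpa [hT] using hj2
      have hadj := hx ⟨Sum.inr (i, j1), hj1S⟩ ⟨Sum.inr (i, j2), hj2S⟩
        (by
          show (crossCompGraph n k t G).Adj (.inl (i,a)) (.inr (i,j1))
          exact ((crossComp_adj_inr_inl n k t G i i a j1).mpr rfl).symm)
        (by
          show (crossCompGraph n k t G).Adj (.inl (i,a)) (.inr (i,j2))
          exact ((crossComp_adj_inr_inl n k t G i i a j2).mpr rfl).symm)
        (by simp [hj12])
      exact crossComp_not_adj_inr_inr n k t G i i j1 j2 hadj
    · -- x is a pendant vertex: its surviving copy-row is a large clique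
      refine ⟨i, Finset.univ.filter (fun a : Fin n =>
        (Sum.inl (i, a) : Fin t × Fin n ⊕ _) ∉ S), ?_, ?_⟩
      · intro a ha b hb hab
        simp only [Finset.coe_filter, Set.mem_setOf_eq] at ha hb
        have hadj := hx ⟨Sum.inl (i, a), ha.2⟩ ⟨Sum.inl (i, b), hb.2⟩
          (by
            show (crossCompGraph n k t G).Adj (.inr (i,j)) (.inl (i,a))
            exact (crossComp_adj_inr_inl n k t G i i a j).mpr rfl)
          (by
            show (crossCompGraph n k t G).Adj (.inr (i,j)) (.inl (i,b))
            exact (crossComp_adj_inr_inl n k t G i i b j).mpr rfl)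
          (by simp [hab])
        have := (crossComp_adj_inl_inl n k t G i i a b).mp hadj
        exact this.2.2
      · -- cardinality bound
        have hinj : Function.Injective
            (fun a : Fin n => (Sum.inl (i, a) : Fin t × Fin n ⊕ Fin t × Fin (n-k+2))) := by
          intro a b h; simpa using h
        have hcc : (Finset.univ.filter (fun a : Fin n =>
            (Sum.inl (i, a) : Fin t × Fin n ⊕ _) ∈ S)).card ≤ S.card := by
          calc _ = ((Finset.univ.filter (fun a : Fin n =>
                (Sum.inl (i, a) : Fin t × Fin n ⊕ _) ∈ S)).image
                (fun a => (Sum.inl (i, a) : Fin t × Fin n ⊕ _))).card :=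
              (Finset.card_image_of_injective _ hinj).symm
            _ ≤ S.card := by
              apply Finset.card_le_card
              intro v hv
              simp only [Finset.mem_image, Finset.mem_filter] at hv
              obtain ⟨j, hj, rfl⟩ := hv
              exact hj.2
        have hsum := Finset.card_filter_add_card_filter_not
          (s := (Finset.univ : Finset (Fin n)))
          (p := fun a : Fin n => (Sum.inl (i, a) : Fin t × Fin n ⊕ _) ∈ S)
        simp only [Finset.card_univ, Fintype.card_fin] at hsum
        omega
  · rintro ⟨i, K, hK, hkK⟩
    refine ⟨(Finset.univ \ K).image
      (fun a => (Sum.inl (i, a) : Fin t × Fin n ⊕ Fin t × Fin (n-k+2))), ?_, ?_⟩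
    · rw [Finset.card_image_of_injective _ (by intro a b h; simpa using h)]
      have : (Finset.univ \ K).card = n - K.card := by
        rw [Finset.card_sdiff_of_subset (Finset.subset_univ _)]; simp
      omega
    · have hx0 : (Sum.inr (i, (⟨0, by omega⟩ : Fin (n-k+2))) : Fin t × Fin n ⊕ _) ∈
          ((↑((Finset.univ \ K).image
            (fun a => (Sum.inl (i, a) : Fin t × Fin n ⊕ Fin t × Fin (n-k+2)))) : Set _)ᶜ) := by
        simp
      refine ⟨⟨_, hx0⟩, ?_⟩
      rintro ⟨y, hy⟩ ⟨z, hz⟩ hxy hxz hyz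
      -- characterize neighbors of the pendant vertex
      have hnbr : ∀ v : Fin t × Fin n ⊕ Fin t × Fin (n-k+2),
          (crossCompGraph n k t G).Adj (.inr (i, ⟨0, by omega⟩)) v →
          ∃ a : Fin n, v = .inl (i, a) := by
        rintro (⟨i', a⟩ | ⟨i', j'⟩) h
        · obtain rfl := (crossComp_adj_inr_inl n k t G i i' a _).mp h
          exact ⟨a, rfl⟩
        · exact absurd h (crossComp_not_adj_inr_inr n k t G i i' _ j')
      obtain ⟨a, rfl⟩ := hnbr y hxy
      obtain ⟨b, rfl⟩ := hnbr z hxz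
      have haK : a ∈ K := by
        simp only [Set.mem_compl_iff, Finset.coe_image, Set.mem_image,
          Finset.mem_coe, Finset.mem_sdiff, Finset.mem_univ, true_and] at hy
        by_contra hna
        exact hy ⟨a, hna, rfl⟩
      have hbK : b ∈ K := by
        simp only [Set.mem_compl_iff, Finset.coe_image, Set.mem_image,
          Finset.mem_coe, Finset.mem_sdiff, Finset.mem_univ, true_and] at hz
        by_contra hnb
        exact hz ⟨b, hnb, rfl⟩
      have hab : a ≠ b := by
        intro h; apply hyz; subst h; rfl
      show (crossCompGraph n k t G).Adj (.inl (i,a)) (.inl (i,b))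
      exact (crossComp_adj_inl_inl n k t G i i a b).mpr ⟨rfl, hab, hK haK hbK hab⟩
end
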